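/- Let (γ,ν) : I → Δ₁ be a spacelike Legendre curve with curvature (m,n), μ = γ∧ν, and suppose there exists a smooth function f : I → ℝ with m(t) + f(t)n(t) = 0 for all t ∈ I. Then (γ,−ν) is a spacelike Legendre curve with curvature (−m,n) (and frame {γ,−ν,−μ}), the function −f satisfies (−m) + (−f)n = 0, and the horocyclic evolute of (γ,−ν) with sign ± (built with the function −f) satisfies: (i) it equals Ev^∓(γ)(t) = γ(t) + f(t)ν(t) + (f(t)²/2)(γ(t) ∓ μ(t)); (ii) together with ν̄_E^± := ν_E^∓ it is a spacelike Legendre curve with curvature (m̄_E^±, n̄_E^±) = (−ḟ ∓ f²n/2, ∓ḟ − f²n/2 + n). Here ν_E^∓(t) = ±(f(t)²/2)γ(t) ± f(t)ν(t) + (1 − f(t)²/2)μ(t). -/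

import Mathlib

noncomputable section

/-- Pseudo scalar product of Lorentz–Minkowski 3-space. -/
def mink (x y : Fin 3 → ℝ) : ℝ := -(x 0 * y 0) + x 1 * y 1 + x 2 * y 2

/-- Pseudo vector product of Lorentz–Minkowski 3-space. -/
def lcross (x y : Fin 3 → ℝ) : Fin 3 → ℝ :=
  ![-(x 1 * y 2 - x 2 * y 1), -(x 0 * y 2 - x 2 * y 0), x 0 * y 1 - x 1 * y 0]



lemma lcross_neg_right (x y : Fin 3 → ℝ) : lcross x (-y) = -(lcross x y) := by
  funext i; fin_cases i <;> simp [lcross] <;> ring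

lemma lcross_smul_left (c : ℝ) (x y : Fin 3 → ℝ) : lcross (c • x) y = c • lcross x y := by
  funext i; fin_cases i <;> simp [lcross] <;> ring

lemma lcross_smul_right (c : ℝ) (x y : Fin 3 → ℝ) : lcross x (c • y) = c • lcross x y := by
  funext i; fin_cases i <;> simp [lcross] <;> ring

lemma lcross_xxy (x y : Fin 3 → ℝ) :
    lcross x (lcross x y) = mink x x • y - mink x y • x := by
  funext i; fin_cases i <;> simp [lcross, mink] <;> ring

lemma lcross_yxy (x y : Fin 3 → ℝ) :
    lcross y (lcross x y) = mink x y • y - mink y y • x := by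
  funext i; fin_cases i <;> simp [lcross, mink] <;> ring

lemma lcross_xyy (x y : Fin 3 → ℝ) :
    lcross (lcross x y) y = mink y y • x - mink x y • y := by
  funext i; fin_cases i <;> simp [lcross, mink] <;> ring

lemma mink_comb (g v u : Fin 3 → ℝ) (A B C D G H : ℝ) :
    mink (A•g + B•v + C•u) (D•g + G•v + H•u)
    = A*D*mink g g + (A*G+B*D)*mink g v + B*G*mink v v
      + (A*H+D*C)*mink g u + (B*H+G*C)*mink v u + C*H*mink u u := by
  simp [mink]; ring

lemma mink_lcross_left (x y : Fin 3 → ℝ) : mink x (lcross x y) = 0 := by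
  simp [mink, lcross]; ring

lemma mink_lcross_right (x y : Fin 3 → ℝ) : mink y (lcross x y) = 0 := by
  simp [mink, lcross]; ring

lemma mink_lcross_self (x y : Fin 3 → ℝ) :
    mink (lcross x y) (lcross x y) = -(mink x x * mink y y) + (mink x y)^2 := by
  simp [mink, lcross]; ring

lemma lcross_comb (g v : Fin 3 → ℝ) (A B C D G H : ℝ) :
    lcross (A•g + B•v + C•lcross g v) (D•g + G•v + H•lcross g v)
    = (A*G - B*D) • lcross g v + (A*H - C*D) • lcross g (lcross g v)
      + (B*H - C*G) • lcross v (lcross g v) := by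
  funext i; fin_cases i <;> simp [lcross] <;> ring


set_option maxHeartbeats 1000000 in
/-- `(γ,−ν)` is a spacelike Legendre curve with curvature `(−m,n)`, the function `−f`
satisfies `(−m) + (−f)n = 0`, and the horocyclic evolute of `(γ,−ν)` with sign `±`
(built with `−f`) equals `Ev^∓(γ)`; together with `ν̄_E^± := ν_E^∓` it is a spacelike
Legendre curve with curvature `(−ḟ ∓ f²n/2, ∓ḟ − f²n/2 + n)`.
The sign `±` is encoded by `ε ∈ {1, -1}` (so `∓` is `−ε`). -/
theorem stmt_6 (I : Set ℝ) (hI : I.OrdConnected)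
    (γ ν : ℝ → Fin 3 → ℝ) (m n : ℝ → ℝ)
    (hγ : ContDiff ℝ (⊤ : ℕ∞) γ) (hν : ContDiff ℝ (⊤ : ℕ∞) ν)
    (hm : ContDiff ℝ (⊤ : ℕ∞) m) (hn : ContDiff ℝ (⊤ : ℕ∞) n)
    (hH : ∀ t ∈ I, mink (γ t) (γ t) = -1 ∧ 0 < γ t 0)
    (hS : ∀ t ∈ I, mink (ν t) (ν t) = 1)
    (hO : ∀ t ∈ I, mink (γ t) (ν t) = 0)
    (hdγ : ∀ t ∈ I, deriv γ t = m t • lcross (γ t) (ν t))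
    (hdν : ∀ t ∈ I, deriv ν t = n t • lcross (γ t) (ν t))
    (ε : ℝ) (hε : ε = 1 ∨ ε = -1)
    (f : ℝ → ℝ) (hf : ContDiff ℝ (⊤ : ℕ∞) f)
    (hfmn : ∀ t ∈ I, m t + f t * n t = 0)
    (Evbar : ℝ → Fin 3 → ℝ)
    (hEvbar : ∀ t, Evbar t
      = γ t + (-(f t)) • (-(ν t))
        + ((-(f t)) ^ 2 / 2) • (γ t + ε • lcross (γ t) (-(ν t))))
    (νEbar : ℝ → Fin 3 → ℝ)
    (hνEbar : ∀ t, νEbar t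
      = (ε * (f t ^ 2 / 2)) • γ t + (ε * f t) • ν t
        + (1 - f t ^ 2 / 2) • lcross (γ t) (ν t)) :
    (∀ t ∈ I,
      mink (-(ν t)) (-(ν t)) = 1 ∧
      mink (γ t) (-(ν t)) = 0 ∧
      deriv γ t = (-(m t)) • lcross (γ t) (-(ν t)) ∧
      deriv (fun τ => -(ν τ)) t = n t • lcross (γ t) (-(ν t)) ∧
      -(m t) + (-(f t)) * n t = 0) ∧
    (∀ t, Evbar t
      = γ t + f t • ν t + (f t ^ 2 / 2) • (γ t + (-ε) • lcross (γ t) (ν t))) ∧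
    (∀ t ∈ I,
      (mink (Evbar t) (Evbar t) = -1 ∧ 0 < Evbar t 0) ∧
      mink (νEbar t) (νEbar t) = 1 ∧
      mink (Evbar t) (νEbar t) = 0 ∧
      deriv Evbar t
        = (-(deriv f t) - ε * (f t ^ 2 * n t / 2)) • lcross (Evbar t) (νEbar t) ∧
      deriv νEbar t
        = (-ε * deriv f t - f t ^ 2 * n t / 2 + n t) • lcross (Evbar t) (νEbar t)) := by
  have part2 : ∀ t, Evbar t
      = γ t + f t • ν t + (f t ^ 2 / 2) • (γ t + (-ε) • lcross (γ t) (ν t)) := by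
    intro t
    rw [hEvbar t, lcross_neg_right]
    module
  refine ⟨?_, part2, ?_⟩
  · intro t ht
    have hvv := hS t ht
    have hgv := hO t ht
    refine ⟨?_, ?_, ?_, ?_, by linarith [hfmn t ht]⟩
    · simp only [mink, Pi.neg_apply] at hvv ⊢; linarith
    · simp only [mink, Pi.neg_apply] at hgv ⊢; linarith
    · rw [hdγ t ht, lcross_neg_right]; module
    · have hd : deriv (fun τ => -(ν τ)) t = -(deriv ν t) := deriv.neg
      rw [hd, hdν t ht, lcross_neg_right]; module
  · intro t ht
    obtain ⟨hgg, hg0⟩ := hH t ht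
    have hvv := hS t ht
    have hgv := hO t ht
    have hgu := mink_lcross_left (γ t) (ν t)
    have hvu := mink_lcross_right (γ t) (ν t)
    have huu : mink (lcross (γ t) (ν t)) (lcross (γ t) (ν t)) = 1 := by
      rw [mink_lcross_self, hgg, hvv, hgv]; ring
    have hmt : m t = -(f t * n t) := by linarith [hfmn t ht]
    -- frame expression for Evbar
    have eE : Evbar t = (1 + f t ^ 2 / 2) • γ t + f t • ν t
        + (-(ε * (f t ^ 2 / 2))) • lcross (γ t) (ν t) := by
      rw [part2 t]; module
    have hEE : mink (Evbar t) (Evbar t) = -1 := by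
      rw [eE, mink_comb, hgg, hvv, hgv, hgu, hvu, huu]
      rcases hε with rfl | rfl <;> ring
    have hNN : mink (νEbar t) (νEbar t) = 1 := by
      rw [hνEbar t, mink_comb, hgg, hvv, hgv, hgu, hvu, huu]
      rcases hε with rfl | rfl <;> ring
    have hEN : mink (Evbar t) (νEbar t) = 0 := by
      rw [eE, hνEbar t, mink_comb, hgg, hvv, hgv, hgu, hvu, huu]
      rcases hε with rfl | rfl <;> ring
    have hgE : mink (γ t) (Evbar t) = -(1 + f t ^ 2 / 2) := by
      have hg : γ t = (1:ℝ) • γ t + (0:ℝ) • ν t + (0:ℝ) • lcross (γ t) (ν t) := by module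
      rw [show mink (γ t) (Evbar t)
          = mink ((1:ℝ) • γ t + (0:ℝ) • ν t + (0:ℝ) • lcross (γ t) (ν t)) (Evbar t) by rw [← hg],
        eE, mink_comb, hgg, hvv, hgv, hgu, hvu, huu]
      ring
    have hE0 : 0 < Evbar t 0 := by
      have h1 := hgg; have h2 := hEE; have h3 := hgE
      simp only [mink] at h1 h2 h3
      have key : 2*(1 + f t ^ 2/2)*(γ t 0 * Evbar t 0) - (1 + f t ^ 2/2)^2
          = 1 + (γ t 1 ^ 2 + γ t 2 ^ 2) + (Evbar t 1 ^ 2 + Evbar t 2 ^ 2)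
            + (γ t 1 * Evbar t 2 - γ t 2 * Evbar t 1)^2 := by
        linear_combination (-(γ t 1 ^ 2 + γ t 2 ^ 2 + 1)) * h2 - (Evbar t 0)^2 * h1
          + (γ t 1 * Evbar t 1 + γ t 2 * Evbar t 2 + γ t 0 * Evbar t 0
              - (1 + f t ^ 2/2)) * h3
      have hpe : 0 < γ t 0 * Evbar t 0 := by
        nlinarith [key, sq_nonneg (f t), sq_nonneg (γ t 1 * Evbar t 2 - γ t 2 * Evbar t 1),
          sq_nonneg (γ t 1), sq_nonneg (γ t 2), sq_nonneg (Evbar t 1), sq_nonneg (Evbar t 2),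
          sq_nonneg (f t ^ 2), sq_nonneg (1 + f t ^ 2/2)]
      nlinarith [hpe, hg0]
    -- derivatives
    have hγt : HasDerivAt γ (deriv γ t) t := (hγ.differentiable (by simp) t).hasDerivAt
    have hνt : HasDerivAt ν (deriv ν t) t := (hν.differentiable (by simp) t).hasDerivAt
    have hft : HasDerivAt f (deriv f t) t := (hf.differentiable (by simp) t).hasDerivAt
    have hγc : ∀ i, HasDerivAt (fun τ => γ τ i) (deriv γ t i) t := fun i => hasDerivAt_pi.mp hγt i
    have hνc : ∀ i, HasDerivAt (fun τ => ν τ i) (deriv ν t i) t := fun i => hasDerivAt_pi.mp hνt i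
    have hut : HasDerivAt (fun τ => lcross (γ τ) (ν τ))
        (lcross (deriv γ t) (ν t) + lcross (γ t) (deriv ν t)) t := by
      rw [hasDerivAt_pi]
      intro i; fin_cases i
      · have h := (((hγc 1).mul (hνc 2)).sub ((hγc 2).mul (hνc 1))).neg
        convert h using 1; rfl
        simp [lcross]; ring
      · have h := (((hγc 0).mul (hνc 2)).sub ((hγc 2).mul (hνc 0))).neg
        convert h using 1; rfl
        simp [lcross]; ring
      · have h := ((hγc 0).mul (hνc 1)).sub ((hγc 1).mul (hνc 0))
        convert h using 1; rfl
        simp [lcross]; ring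
    have hsq : HasDerivAt (fun τ => f τ ^ 2 / 2) (f t * deriv f t) t := by
      have h := (hft.mul hft).div_const 2
      have he : (fun τ => f τ ^ 2 / 2) = fun τ => f τ * f τ / 2 := by funext τ; ring
      rw [he]; convert h using 1; rfl; rfl; rfl; ring
    have hEd : HasDerivAt Evbar
        (deriv γ t + (f t • deriv ν t + deriv f t • ν t)
          + ((f t ^ 2 / 2) • (deriv γ t
              + (-ε) • (lcross (deriv γ t) (ν t) + lcross (γ t) (deriv ν t)))
            + (f t * deriv f t) • (γ t + (-ε) • lcross (γ t) (ν t)))) t := by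
      rw [funext part2]
      exact (hγt.add (hft.smul hνt)).add
        (hsq.smul (hγt.add (hut.const_smul (-ε))))
    have hc1 : HasDerivAt (fun τ => ε * (f τ ^ 2 / 2)) (ε * (f t * deriv f t)) t :=
      hsq.const_mul ε
    have hc2 : HasDerivAt (fun τ => ε * f τ) (ε * deriv f t) t := hft.const_mul ε
    have hc3 : HasDerivAt (fun τ => 1 - f τ ^ 2 / 2) (-(f t * deriv f t)) t := by
      have h := (hasDerivAt_const t (1:ℝ)).sub hsq
      convert h using 1; rfl; rfl; rfl; ring
    have hNd : HasDerivAt νEbar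
        ((ε * (f t ^ 2 / 2)) • deriv γ t + (ε * (f t * deriv f t)) • γ t
          + ((ε * f t) • deriv ν t + (ε * deriv f t) • ν t)
          + ((1 - f t ^ 2 / 2) • (lcross (deriv γ t) (ν t) + lcross (γ t) (deriv ν t))
            + (-(f t * deriv f t)) • lcross (γ t) (ν t))) t := by
      rw [funext hνEbar]
      exact ((hc1.smul hγt).add (hc2.smul hνt)).add (hc3.smul hut)
    refine ⟨⟨hEE, hE0⟩, hNN, hEN, ?_, ?_⟩
    · rw [hEd.deriv, eE, hνEbar t, lcross_comb, hdγ t ht, hdν t ht, hmt]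
      simp only [lcross_smul_left, lcross_smul_right, lcross_xxy, lcross_yxy, lcross_xyy,
        hgg, hvv, hgv]
      rcases hε with rfl | rfl <;> module
    · rw [hNd.deriv, eE, hνEbar t, lcross_comb, hdγ t ht, hdν t ht, hmt]
      simp only [lcross_smul_left, lcross_smul_right, lcross_xxy, lcross_yxy, lcross_xyy,
        hgg, hvv, hgv]
      rcases hε with rfl | rfl <;> module
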